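/- Let A be a real n×n matrix and P a symmetric positive-definite n×n matrix such that A is α-coercive with respect to the inner product ⟨x,y⟩_P = xᵀPy, i.e. ⟨Ax,x⟩_P ≥ α‖x‖_P² for all x, with α > 0. If the sequence (u_i) satisfies the implicit Euler recursion u_{i+1} + Δt·A·u_{i+1} = u_i with time step Δt > 0, then for all i ∈ ℕ, ‖u_i‖_P² ≤ (1 + 2αΔt)^{-i} ‖u_0‖_P². -/

import Mathlib

open Matrix

/-! Expanding the `P`-norm of `u_i = v + Δt • A v`, where `v = u_{i+1}`, gives
`‖u_i‖² = ‖v‖² + 2 Δt ⟨A v, v⟩ + Δt² ‖A v‖² ≥ (1 + 2 α Δt) ‖v‖²` by coercivity, so each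
implicit Euler step contracts the squared `P`-norm by the factor `1 / (1 + 2 α Δt)`. -/

namespace Matrix

variable {n R : Type*} [Fintype n]

theorem IsSymm.dotProduct_mulVec_comm [CommSemiring R] {P : Matrix n n R} (hP : P.IsSymm)
    (x y : n → R) : x ⬝ᵥ P *ᵥ y = y ⬝ᵥ P *ᵥ x := by
  rw [dotProduct_mulVec, ← mulVec_transpose, hP.eq, dotProduct_comm]

theorem IsSymm.dotProduct_mulVec_add_smul [CommRing R] {P : Matrix n n R} (hP : P.IsSymm)
    (v w : n → R) (t : R) :
    (v + t • w) ⬝ᵥ P *ᵥ (v + t • w) =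
      v ⬝ᵥ P *ᵥ v + 2 * t * (w ⬝ᵥ P *ᵥ v) + t ^ 2 * (w ⬝ᵥ P *ᵥ w) := by
  simp only [mulVec_add, mulVec_smul, dotProduct_add, add_dotProduct, smul_dotProduct,
    dotProduct_smul, smul_eq_mul, hP.dotProduct_mulVec_comm v w]
  ring

theorem PosSemidef.dotProduct_mulVec_nonneg_real {P : Matrix n n ℝ} (hP : P.PosSemidef)
    (x : n → ℝ) : 0 ≤ x ⬝ᵥ P *ᵥ x := by
  simpa using hP.dotProduct_mulVec_nonneg x

theorem le_dotProduct_mulVec_add_smul_mulVec {A P : Matrix n n ℝ} (hPsymm : P.IsSymm)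
    (hPpos : P.PosSemidef) {α t : ℝ} (ht : 0 ≤ t) {v : n → ℝ}
    (hcoerc : α * (v ⬝ᵥ P *ᵥ v) ≤ A *ᵥ v ⬝ᵥ P *ᵥ v) :
    (1 + 2 * α * t) * (v ⬝ᵥ P *ᵥ v) ≤ (v + t • A *ᵥ v) ⬝ᵥ P *ᵥ (v + t • A *ᵥ v) := by
  rw [hPsymm.dotProduct_mulVec_add_smul]
  have hAv := hPpos.dotProduct_mulVec_nonneg_real (A *ᵥ v)
  linarith [mul_le_mul_of_nonneg_left hcoerc ht, mul_nonneg (sq_nonneg t) hAv]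

end Matrix

/-- Implicit Euler scheme decay estimate for a matrix `A` which is `α`-coercive
with respect to the inner product induced by a symmetric positive-definite `P`. -/
theorem stmt_0 {n : ℕ} (A P : Matrix (Fin n) (Fin n) ℝ)
    (hPsymm : P.IsSymm) (hPpos : P.PosDef)
    (α : ℝ) (hα : 0 < α)
    (hcoerc : ∀ x : Fin n → ℝ, α * (x ⬝ᵥ P.mulVec x) ≤ (A.mulVec x) ⬝ᵥ P.mulVec x)
    (Δt : ℝ) (hΔt : 0 < Δt)
    (u : ℕ → Fin n → ℝ)
    (hu : ∀ i : ℕ, u (i + 1) + Δt • A.mulVec (u (i + 1)) = u i) :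
    ∀ i : ℕ, (u i) ⬝ᵥ P.mulVec (u i) ≤
      (1 / (1 + 2 * α * Δt)) ^ i * ((u 0) ⬝ᵥ P.mulVec (u 0)) := by
  have hc : 0 < 1 + 2 * α * Δt := by positivity
  have step : ∀ i, u (i + 1) ⬝ᵥ P *ᵥ u (i + 1) ≤ 1 / (1 + 2 * α * Δt) * (u i ⬝ᵥ P *ᵥ u i) := by
    intro i
    rw [div_mul_eq_mul_div, one_mul, le_div_iff₀' hc, ← hu i]
    exact le_dotProduct_mulVec_add_smul_mulVec hPsymm hPpos.posSemidef hΔt.le (hcoerc _)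
  exact fun i ↦ le_geom (u := fun i ↦ u i ⬝ᵥ P *ᵥ u i) (by positivity) i fun k _ ↦ step k
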